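/- arXiv:1702.08255 — 4 statements merged into one kernel-verified Lean document; each statement's English description precedes it below -/
import Mathlib

section
/- Let q be a prime, s ∈ F_q^n, and ω = e^{2πi/q}. For the state (1/√(q^n)) Σ_{a ∈ F_q^n} |a⟩|a·s mod q⟩, after applying the quantum Fourier transform over F_q to each register, the probability that the measurement outcome (j, j*) satisfies j = -j* s mod q and j* ≠ 0 equals (q-1)/q. -/
/-- For the state `(1/√(q^n)) Σ_a |a⟩|a·s⟩`, after applying the QFT over `F_q`
to each register, the probability that the outcome `(j, j*)` satisfies
`j = -j* s (mod q)` and `j* ≠ 0` equals `(q-1)/q`. -/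
theorem stmt1 (q n : ℕ) [Fact (Nat.Prime q)] (s : Fin n → ZMod q) :
    (∑ j : Fin n → ZMod q, ∑ jstar : ZMod q,
      if (j = fun i => -jstar * s i) ∧ jstar ≠ 0 then
        ‖((1 / ((q : ℂ) ^ n * Real.sqrt q)) *
          ∑ a : Fin n → ZMod q,
            Complex.exp (2 * Real.pi * Complex.I / q) ^
              (∑ i, a i * (j i + jstar * s i)).val)‖ ^ 2
      else 0)
    = ((q : ℝ) - 1) / q := by
  have hq : 0 < q := (Fact.out : q.Prime).pos
  have hq0 : (q : ℝ) > 0 := by exact_mod_cast hq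
  rw [Finset.sum_comm]
  have key : ∀ jstar : ZMod q,
      (∑ j : Fin n → ZMod q,
        if (j = fun i => -jstar * s i) ∧ jstar ≠ 0 then
          ‖((1 / ((q : ℂ) ^ n * Real.sqrt q)) *
            ∑ a : Fin n → ZMod q,
              Complex.exp (2 * Real.pi * Complex.I / q) ^
                (∑ i, a i * (j i + jstar * s i)).val)‖ ^ 2
        else 0)
      = if jstar ≠ 0 then 1 / (q : ℝ) else 0 := by
    intro jstar
    by_cases hjs : jstar = 0
    · simp [hjs]
    · simp only [hjs, ne_eq, not_false_eq_true, and_true, if_true]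
      rw [Finset.sum_ite_eq' Finset.univ (fun i => -jstar * s i)]
      simp only [Finset.mem_univ, if_true]
      have hz : ∀ a : Fin n → ZMod q,
          (∑ i, a i * ((-jstar * s i) + jstar * s i)) = 0 := by
        intro a; simp
      have hsum : (∑ a : Fin n → ZMod q,
          Complex.exp (2 * Real.pi * Complex.I / q) ^
            (∑ i, a i * ((-jstar * s i) + jstar * s i)).val) = (q : ℂ) ^ n := by
        rw [Finset.sum_congr rfl (fun a _ => by rw [hz a, ZMod.val_zero, pow_zero])]
        simp [Finset.card_univ, ZMod.card]
      rw [hsum]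
      have hqn : ((q : ℂ) ^ n) ≠ 0 := by
        apply pow_ne_zero; exact_mod_cast hq.ne'
      have hsq : (Real.sqrt q : ℂ) ≠ 0 :=
        Complex.ofReal_ne_zero.mpr (Real.sqrt_ne_zero'.mpr hq0)
      have hred : (1 / ((q : ℂ) ^ n * (Real.sqrt q : ℝ)) * ((q : ℂ) ^ n))
          = 1 / (Real.sqrt q : ℝ) := by
        field_simp
      rw [hred, norm_div, norm_one]
      rw [Complex.norm_real, Real.norm_of_nonneg (Real.sqrt_nonneg _)]
      rw [div_pow, one_pow, Real.sq_sqrt (le_of_lt hq0)]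
  rw [Finset.sum_congr rfl (fun jstar _ => key jstar)]
  rw [Finset.sum_ite, Finset.sum_const_zero, add_zero, Finset.sum_const]
  have hcard : (Finset.univ.filter (fun jstar : ZMod q => jstar ≠ 0)).card = q - 1 := by
    have : (Finset.univ.filter (fun jstar : ZMod q => jstar ≠ 0)) = {(0 : ZMod q)}ᶜ := by
      ext x; simp
    rw [this, Finset.card_compl, Finset.card_singleton]
    simp [ZMod.card]
  rw [hcard]
  rw [nsmul_eq_mul, Nat.cast_sub hq]
  ring
end

section
/- Fix v ∈ [q^n], a subset V ⊆ F_q^n with |V| = v, s ∈ F_q^n, and errors e_a ∈ F_q with |e_a| ≤ k for all a ∈ V (where |e_a| denotes the representative in [-(q-1)/2, (q-1)/2]). Consider the state |ψ⟩ = (1/√v) Σ_{a ∈ V} |a⟩|a·s + e_a mod q⟩. After applying the QFT over F_q to all n+1 registers and measuring, the probability that the outcome (j, j*) satisfies j = -j* s mod q and j* ≠ 0 is at least v/(20 k q^n). -/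
/-! For `j = -j* s` the secret cancels from the phases, and the amplitude of `(j, j*)` is
`(v q^(n+1))^(-1/2) Σ_a ω^(e_a j*)`. If `0 < |j*| ≤ m` with `10 k m ≤ q`, every phase `e_a j*` is
an integer of absolute value at most `q/10`, so each summand has real part at least
`cos (π/5) ≥ 4/5` and that outcome has probability at least `16 v / (25 q^(n+1))`. Summing over
these `2m` values of `j*` with `m = ⌊q/(10k)⌋`, so that `q < 20 k m`, gives the bound. -/

open Finset Real

lemma four_fifths_le_cos {θ : ℝ} (h : |θ| ≤ π / 5) : 4 / 5 ≤ cos θ := by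
  have hθ : θ ^ 2 ≤ (π / 5) ^ 2 := sq_le_sq' (abs_le.1 h).1 (abs_le.1 h).2
  nlinarith [one_sub_sq_div_two_le_cos (x := θ), pi_lt_d2, pi_pos]

lemma exp_two_pi_I_div_pow_val_intCast (q : ℕ) [NeZero q] (y : ℤ) :
    Complex.exp (2 * π * Complex.I / q) ^ (y : ZMod q).val =
      Complex.exp (2 * π * Complex.I * y / q) := by
  rw [← Complex.exp_nat_mul, Complex.exp_eq_exp_iff_exists_int]
  refine ⟨-(y / q), ?_⟩
  have hval : (((y : ZMod q).val : ℤ) : ℂ) = y - q * (y / q : ℤ) := by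
    rw [ZMod.val_intCast, Int.emod_def]; push_cast; ring
  have hq : (q : ℂ) ≠ 0 := Nat.cast_ne_zero.2 (NeZero.ne q)
  push_cast at hval ⊢
  rw [hval]
  field_simp
  ring

lemma four_fifths_le_re_exp_pow_val {q : ℕ} [NeZero q] {y : ℤ} (hy : 10 * |y| ≤ q) :
    4 / 5 ≤ (Complex.exp (2 * π * Complex.I / q) ^ (y : ZMod q).val).re := by
  have hq : (0 : ℝ) < q := Nat.cast_pos.2 (NeZero.pos q)
  have hy' : 10 * |(y : ℝ)| ≤ q := by exact_mod_cast hy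
  have harg : 2 * π * Complex.I * y / q = (2 * π * y / q : ℝ) * Complex.I := by push_cast; ring
  rw [exp_two_pi_I_div_pow_val_intCast, harg, Complex.exp_ofReal_mul_I_re]
  apply four_fifths_le_cos
  rw [abs_div, abs_mul, abs_of_pos (by positivity : 0 < 2 * π), abs_of_pos hq, div_le_iff₀ hq]
  nlinarith [pi_pos]

lemma card_mul_le_norm_sum {ι : Type*} (s : Finset ι) (f : ι → ℂ) {r : ℝ}
    (h : ∀ i ∈ s, r ≤ (f i).re) : #s * r ≤ ‖∑ i ∈ s, f i‖ :=
  calc #s * r = #s • r := (nsmul_eq_mul _ _).symm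
    _ ≤ ∑ i ∈ s, (f i).re := card_nsmul_le_sum _ _ _ h
    _ = (∑ i ∈ s, f i).re := (Complex.re_sum _ _).symm
    _ ≤ _ := Complex.re_le_norm _

lemma norm_ofReal_inv_sqrt_mul_sq {x y : ℝ} (hx : 0 ≤ x) (hy : 0 ≤ y) (z : ℂ) :
    ‖((1 / √x : ℝ) : ℂ) * ((1 / √y : ℝ) : ℂ) * z‖ ^ 2 = ‖z‖ ^ 2 / (x * y) := by
  simp only [norm_mul, Complex.norm_real, Real.norm_eq_abs, mul_pow, sq_abs, div_pow, one_pow,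
    sq_sqrt hx, sq_sqrt hy]
  ring

lemma sum_sum_ite_eq_and_ne_zero {α β M : Type*} [Fintype α] [Fintype β] [DecidableEq α]
    [DecidableEq β] [Zero β] [AddCommMonoid M] (g : β → α) (F : α → β → M) :
    ∑ a, ∑ b, (if a = g b ∧ b ≠ 0 then F a b else 0) = ∑ b, if b ≠ 0 then F (g b) b else 0 := by
  rw [sum_comm]
  refine sum_congr rfl fun b _ => ?_
  simp only [ite_and, sum_ite_eq', mem_univ, if_true]

lemma sum_mul_neg_mul_add_mul {R ι : Type*} [CommRing R] [Fintype ι] (a s : ι → R) (e t : R) :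
    ∑ i, a i * (-t * s i) + ((∑ i, a i * s i) + e) * t = e * t := by
  have h : ∑ i, a i * (-t * s i) = -(∑ i, a i * s i) * t := by
    rw [neg_mul, sum_mul, ← sum_neg_distrib]; exact sum_congr rfl fun i _ => by ring
  rw [h]; ring

lemma ZMod.valMinAbs_intCast_of_two_mul_abs_lt {n : ℕ} [NeZero n] {i : ℤ} (h : 2 * |i| < n) :
    (i : ZMod n).valMinAbs = i :=
  (ZMod.valMinAbs_spec _ _).2 ⟨rfl, by constructor <;> linarith [neg_abs_le i, le_abs_self i]⟩

lemma two_mul_le_sum_ite_ne_zero {q m : ℕ} [NeZero q] (hm : 2 * m < q)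
    {F : ZMod q → ℝ} (hF : ∀ t, 0 ≤ F t) {c : ℝ} (hc : ∀ i : ℤ, i ≠ 0 → |i| ≤ m → c ≤ F i) :
    2 * m * c ≤ ∑ t : ZMod q, if t ≠ 0 then F t else 0 := by
  set W := (Icc (-(m : ℤ)) m).erase 0
  have hW : ∀ i ∈ W, i ≠ 0 ∧ |i| ≤ m := fun i hi => by
    rw [mem_erase, mem_Icc] at hi
    exact ⟨hi.1, abs_le.2 hi.2⟩
  have hval : ∀ i ∈ W, (i : ZMod q).valMinAbs = i := fun i hi =>
    ZMod.valMinAbs_intCast_of_two_mul_abs_lt (by have := (hW i hi).2; omega)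
  have hcard : #W = 2 * m := by
    rw [card_erase_of_mem (by simp), Int.card_Icc]
    omega
  calc 2 * m * c = ∑ i ∈ W, c := by rw [sum_const, hcard, nsmul_eq_mul]; push_cast; ring
    _ ≤ ∑ i ∈ W, F i := sum_le_sum fun i hi => hc i (hW i hi).1 (hW i hi).2
    _ = ∑ t ∈ W.image Int.cast, F t :=
      (sum_image fun i hi j hj h => by rw [← hval i hi, ← hval j hj, h]).symm
    _ ≤ ∑ t ∈ univ.filter (· ≠ 0), F t := by
      refine sum_le_sum_of_subset_of_nonneg ?_ fun t _ _ => hF t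
      intro t ht
      obtain ⟨i, hi, rfl⟩ := mem_image.1 ht
      rw [mem_filter, ne_eq, ← ZMod.valMinAbs_eq_zero, hval i hi]
      exact ⟨mem_univ _, (hW i hi).1⟩
    _ = _ := sum_filter _ _

lemma le_norm_normalized_sum_sq {ι : Type*} {q k m : ℕ} [NeZero q] (hkm : 10 * k * m ≤ q)
    (V : Finset ι) (e : ι → ZMod q) (he : ∀ a ∈ V, |(e a).valMinAbs| ≤ k) {i : ℤ}
    (hi : |i| ≤ m) {Q : ℝ} (hQ : 0 ≤ Q) :
    16 * (#V : ℝ) / (25 * Q) ≤ ‖((1 / √(#V : ℝ) : ℝ) : ℂ) * ((1 / √Q : ℝ) : ℂ) *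
      ∑ a ∈ V, Complex.exp (2 * π * Complex.I / q) ^ (e a * i).val‖ ^ 2 := by
  have hre : ∀ a ∈ V, 4 / 5 ≤ (Complex.exp (2 * π * Complex.I / q) ^ (e a * i).val).re := by
    intro a ha
    rw [← ZMod.coe_valMinAbs (e a), ← Int.cast_mul]
    apply four_fifths_le_re_exp_pow_val
    calc 10 * |(e a).valMinAbs * i| ≤ 10 * (k * m) := by
          rw [abs_mul]; gcongr
          exact he a ha
      _ ≤ q := by rw [← mul_assoc]; exact_mod_cast hkm
  have hsum := card_mul_le_norm_sum V _ hre
  rw [norm_ofReal_inv_sqrt_mul_sq (Nat.cast_nonneg _) hQ]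
  calc 16 * (#V : ℝ) / (25 * Q) = (#V * (4 / 5)) ^ 2 / (#V * Q) := by
        rcases (Nat.cast_nonneg (α := ℝ) #V).eq_or_lt with h | h
        · simp [← h]
        · field_simp
          ring
    _ ≤ _ := by gcongr

theorem stmt4_general (q n v k : ℕ) [Fact (Nat.Prime q)] (hk : 1 ≤ k) (hq : 20 * k < q)
    (V : Finset (Fin n → ZMod q)) (hV : V.card = v)
    (s : Fin n → ZMod q) (e : (Fin n → ZMod q) → ZMod q)
    (he : ∀ a ∈ V, |(e a).valMinAbs| ≤ (k : ℤ)) :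
    (v : ℝ) / (20 * k * q ^ n) ≤
      ∑ j : Fin n → ZMod q, ∑ jstar : ZMod q,
        if (j = fun i => -jstar * s i) ∧ jstar ≠ 0 then
          ‖((1 / Real.sqrt v : ℝ) : ℂ) * ((1 / Real.sqrt (q ^ (n + 1)) : ℝ) : ℂ) *
            ∑ a ∈ V,
              Complex.exp (2 * Real.pi * Complex.I / q) ^
                ((∑ i, a i * j i) + ((∑ i, a i * s i) + e a) * jstar).val‖ ^ 2
        else 0 := by
  obtain ⟨m, hkm, hqm⟩ : ∃ m, 10 * k * m ≤ q ∧ q < 20 * k * m := by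
    refine ⟨q / (10 * k), Nat.mul_div_le q (10 * k), ?_⟩
    have := Nat.lt_mul_div_succ q (show 0 < 10 * k by omega)
    nlinarith
  have hm : 2 * m < q := by nlinarith
  rw [sum_sum_ite_eq_and_ne_zero (fun t i => -t * s i)]
  simp only [sum_mul_neg_mul_add_mul]
  subst hV
  have hq0 : (0 : ℝ) < q := Nat.cast_pos.2 (NeZero.pos q)
  have hk0 : (0 : ℝ) < k := by exact_mod_cast hk
  have hqm' : (q : ℝ) < 20 * k * m := by exact_mod_cast hqm
  calc (#V : ℝ) / (20 * k * q ^ n) ≤ 640 * k * m / (25 * q) * (#V / (20 * k * q ^ n)) :=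
        le_mul_of_one_le_left (by positivity) ((one_le_div (by positivity)).2 (by linarith))
    _ = 2 * m * (16 * #V / (25 * q ^ (n + 1))) := by
        field_simp
        ring
    _ ≤ _ := two_mul_le_sum_ite_ne_zero hm (fun t => by positivity)
        fun i _ hi => le_norm_normalized_sum_sq hkm V e he hi (by positivity)

/-- For the noisy state `(1/√v) Σ_{a ∈ V} |a⟩|a·s + e_a⟩` with `|V| = v` and
`|e_a| ≤ k` (centered representatives), after applying the QFT over `F_q` to all
`n+1` registers and measuring, the outcome `(j, j*)` satisfies `j = -j* s` and
`j* ≠ 0` with probability at least `v/(20 k q^n)`. -/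
theorem stmt4 (q n v k : ℕ) [Fact (Nat.Prime q)] (hk : 1 ≤ k) (hq : 20 * k < q)
    (V : Finset (Fin n → ZMod q)) (hV : V.card = v) (hv : 1 ≤ v)
    (s : Fin n → ZMod q) (e : (Fin n → ZMod q) → ZMod q)
    (he : ∀ a ∈ V, |(e a).valMinAbs| ≤ (k : ℤ)) :
    (v : ℝ) / (20 * k * q ^ n) ≤
      ∑ j : Fin n → ZMod q, ∑ jstar : ZMod q,
        if (j = fun i => -jstar * s i) ∧ jstar ≠ 0 then
          ‖((1 / Real.sqrt v : ℝ) : ℂ) * ((1 / Real.sqrt (q ^ (n + 1)) : ℝ) : ℂ) *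
            ∑ a ∈ V,
              Complex.exp (2 * Real.pi * Complex.I / q) ^
                ((∑ i, a i * j i) + ((∑ i, a i * s i) + e a) * jstar).val‖ ^ 2
        else 0 :=
  stmt4_general q n v k hk hq V hV s e he
end

section
/- Test Candidate with M independent iterations, each drawing a fresh classical sample (a, a·s + e_a) with a uniform over F_q^n and |e_a| ≤ k, accepts a candidate s̃ = s with probability 1, and accepts any fixed s̃ ≠ s with probability at most ((2k+1)/q)^M. -/
open scoped ENNReal

lemma count_good (q k : ℕ) [Fact (Nat.Prime q)] (hq : 2 * k + 1 < q) :
    (Finset.univ.filter (fun w : ZMod q => |w.valMinAbs| ≤ (k:ℤ))).card = 2 * k + 1 := by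
  haveI : NeZero q := ⟨(Fact.out : q.Prime).ne_zero⟩
  have hq' : (2 * k + 1 : ℤ) < q := by exact_mod_cast hq
  have key : ∀ i : ℤ, -(k:ℤ) ≤ i → i ≤ k → ((i : ZMod q)).valMinAbs = i := by
    intro i h1 h2
    rw [ZMod.valMinAbs_spec]
    refine ⟨rfl, ?_, ?_⟩ <;> [skip; skip] <;> nlinarith
  have himg : Finset.univ.filter (fun w : ZMod q => |w.valMinAbs| ≤ (k:ℤ))
      = (Finset.Icc (-(k:ℤ)) k).image (fun i : ℤ => (i : ZMod q)) := by
    ext w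
    simp only [Finset.mem_filter, Finset.mem_univ, true_and, Finset.mem_image, Finset.mem_Icc]
    constructor
    · intro hw
      exact ⟨w.valMinAbs, ⟨neg_le_of_abs_le hw, le_of_abs_le hw⟩, w.coe_valMinAbs⟩
    · rintro ⟨i, ⟨h1, h2⟩, rfl⟩
      rw [key i h1 h2, abs_le]; exact ⟨h1, h2⟩
  rw [himg, Finset.card_image_of_injOn, Int.card_Icc]
  · omega
  · intro i hi j hj hij
    simp only [Finset.coe_Icc, Set.mem_Icc] at hi hj
    simp only [] at hij; rw [← key i hi.1 hi.2, ← key j hj.1 hj.2]; exact congrArg _ hij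

lemma iter_bound (q n k : ℕ) [Fact (Nat.Prime q)] (hq : 2 * k + 1 < q)
    (d : Fin n → ZMod q) (x₀ : Fin n) (hx₀ : d x₀ ≠ 0) (ν : PMF (ZMod q)) :
    ∑ A : Fin n → ZMod q, ∑ E : ZMod q,
      (if |((∑ x, A x * d x) + E).valMinAbs| ≤ (k:ℤ) then ν E * ((1:ℝ≥0∞)/(q:ℝ≥0∞)^n) else 0)
      ≤ (2*k+1 : ℝ≥0∞) / q := by
  haveI : NeZero q := ⟨(Fact.out : q.Prime).ne_zero⟩
  have hq0 : (q:ℝ≥0∞) ≠ 0 := by exact_mod_cast (Fact.out : q.Prime).ne_zero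
  have hqt : (q:ℝ≥0∞) ≠ ⊤ := ENNReal.natCast_ne_top q
  set c : ℝ≥0∞ := (1:ℝ≥0∞)/(q:ℝ≥0∞)^n with hc
  -- injectivity of the update map
  have hinj : Function.Injective
      (fun a : Fin n → ZMod q => Function.update a x₀ (∑ x, a x * d x)) := by
    intro a a' h
    have hne : ∀ x, x ≠ x₀ → a x = a' x := fun x hx => by
      have := congrFun h x; simpa [Function.update_of_ne hx] using this
    have hsum : ∑ x, a x * d x = ∑ x, a' x * d x := by
      have := congrFun h x₀; simpa using this
    have hx0 : a x₀ = a' x₀ := by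
      rw [← Finset.add_sum_erase _ _ (Finset.mem_univ x₀),
        ← Finset.add_sum_erase _ (fun x => a' x * d x) (Finset.mem_univ x₀)] at hsum
      have hrest : ∑ x ∈ Finset.univ.erase x₀, a x * d x
          = ∑ x ∈ Finset.univ.erase x₀, a' x * d x :=
        Finset.sum_congr rfl fun x hx => by rw [hne x (Finset.ne_of_mem_erase hx)]
      rw [hrest] at hsum
      exact mul_right_cancel₀ hx₀ (add_right_cancel hsum)
    funext x
    by_cases hx : x = x₀
    · subst hx; exact hx0
    · exact hne x hx
  have hbij := Finite.injective_iff_bijective.mp hinj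
  -- counting
  have hcount : ∀ E : ZMod q,
      (∑ A : Fin n → ZMod q,
        if |((∑ x, A x * d x) + E).valMinAbs| ≤ (k:ℤ) then (1:ℝ≥0∞) else 0)
      = (q ^ (n-1) * (2*k+1) : ℕ) := by
    intro E
    have h1 : (∑ A : Fin n → ZMod q,
        if |((∑ x, A x * d x) + E).valMinAbs| ≤ (k:ℤ) then (1:ℝ≥0∞) else 0)
        = ∑ b : Fin n → ZMod q, if |(b x₀ + E).valMinAbs| ≤ (k:ℤ) then (1:ℝ≥0∞) else 0 := by
      rw [← hbij.sum_comp
        (fun b => if |(b x₀ + E).valMinAbs| ≤ (k:ℤ) then (1:ℝ≥0∞) else 0)]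
      refine Finset.sum_congr rfl fun a _ => ?_
      simp [Function.update_self]
    rw [h1]
    have h2 : (∑ b : Fin n → ZMod q, if |(b x₀ + E).valMinAbs| ≤ (k:ℤ) then (1:ℝ≥0∞) else 0)
        = ∑ p : ZMod q × ({j : Fin n // j ≠ x₀} → ZMod q),
            if |(p.1 + E).valMinAbs| ≤ (k:ℤ) then (1:ℝ≥0∞) else 0 := by
      exact Fintype.sum_equiv (Equiv.funSplitAt x₀ (ZMod q)) _ _ (fun b => rfl)
    rw [h2, Fintype.sum_prod_type, Finset.sum_comm]
    dsimp only
    rw [Finset.sum_const (b := ∑ x : ZMod q, if |(x + E).valMinAbs| ≤ (k:ℤ) then (1:ℝ≥0∞) else 0),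
      Finset.card_univ, nsmul_eq_mul]
    have h3 : (∑ v : ZMod q, if |(v + E).valMinAbs| ≤ (k:ℤ) then (1:ℝ≥0∞) else 0)
        = ∑ w : ZMod q, if |w.valMinAbs| ≤ (k:ℤ) then (1:ℝ≥0∞) else 0 :=
      Fintype.sum_equiv (Equiv.addRight E) _ _ (fun v => rfl)
    rw [h3, Finset.sum_boole, count_good q k hq]
    have hcard : Fintype.card ({ j : Fin n // j ≠ x₀ } → ZMod q) = q ^ (n - 1) := by
      rw [Fintype.card_fun, ZMod.card]
      congr 1
      rw [Fintype.card_subtype_compl, Fintype.card_fin, Fintype.card_subtype_eq]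
    rw [hcard]
    push_cast
    ring
  have hν : ∑ E : ZMod q, (ν E : ℝ≥0∞) = 1 := by
    rw [← tsum_fintype (L := SummationFilter.unconditional (ZMod q))]; exact ν.tsum_coe
  have hswap : ∀ E : ZMod q,
      (∑ A : Fin n → ZMod q,
        if |((∑ x, A x * d x) + E).valMinAbs| ≤ (k:ℤ) then ν E * c else 0)
      = ((q ^ (n-1) * (2*k+1) : ℕ) : ℝ≥0∞) * (ν E * c) := by
    intro E
    rw [← hcount E, Finset.sum_mul]
    exact Finset.sum_congr rfl fun A _ => (boole_mul _ _).symm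
  have hp0 : ((q:ℝ≥0∞)) ^ (n-1) ≠ 0 := pow_ne_zero _ hq0
  have hpt : ((q:ℝ≥0∞)) ^ (n-1) ≠ ⊤ := ENNReal.pow_ne_top hqt
  calc (∑ A : Fin n → ZMod q, ∑ E : ZMod q,
        if |((∑ x, A x * d x) + E).valMinAbs| ≤ (k:ℤ) then ν E * c else 0)
      = ∑ E : ZMod q, ∑ A : Fin n → ZMod q,
        (if |((∑ x, A x * d x) + E).valMinAbs| ≤ (k:ℤ) then ν E * c else 0) :=
        Finset.sum_comm
    _ = ∑ E : ZMod q, ((q ^ (n-1) * (2*k+1) : ℕ) : ℝ≥0∞) * (ν E * c) :=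
        Finset.sum_congr rfl fun E _ => hswap E
    _ = ((q ^ (n-1) * (2*k+1) : ℕ) : ℝ≥0∞) * c * ∑ E : ZMod q, (ν E : ℝ≥0∞) := by
        rw [Finset.mul_sum]; exact Finset.sum_congr rfl fun E _ => by ring
    _ = ((q ^ (n-1) * (2*k+1) : ℕ) : ℝ≥0∞) * c := by rw [hν, mul_one]
    _ = (2*k+1 : ℝ≥0∞) / q := by
        have hqn : (q:ℝ≥0∞) ^ n = (q:ℝ≥0∞) ^ (n-1) * q := by
          rw [← pow_succ]
          congr 1
          have : 0 < n := x₀.pos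
          omega
        rw [hc, hqn, one_div, ENNReal.mul_inv (Or.inl hp0) (Or.inl hpt)]
        push_cast
        calc (q:ℝ≥0∞) ^ (n-1) * (2*k+1) * (((q:ℝ≥0∞) ^ (n-1))⁻¹ * (q:ℝ≥0∞)⁻¹)
            = ((q:ℝ≥0∞) ^ (n-1) * ((q:ℝ≥0∞) ^ (n-1))⁻¹) * ((2*k+1) * (q:ℝ≥0∞)⁻¹) := by ring
          _ = (2*k+1 : ℝ≥0∞) * (q:ℝ≥0∞)⁻¹ := by
              rw [ENNReal.mul_inv_cancel hp0 hpt, one_mul]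
          _ = (2*k+1 : ℝ≥0∞) / q := by rw [div_eq_mul_inv]
    _ ≤ (2*k+1 : ℝ≥0∞) / q := le_refl _

set_option maxHeartbeats 1000000 in
/-- Test Candidate with `M` independent iterations, each drawing a fresh
classical sample `(a, a·s + e_a)` with `a` uniform over `F_q^n` and errors of
magnitude at most `k` (the error of iteration `i` distributed as `μ i`,
independently): it accepts the candidate `s̃ = s` with probability `1`
(i.e. always, whenever the errors have magnitude at most `k`), and it accepts
any fixed `s̃ ≠ s` with probability at most `((2k+1)/q)^M`. -/
theorem stmt8 (q n k M : ℕ) [Fact (Nat.Prime q)] (hq : 2 * k + 1 < q)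
    (s st : Fin n → ZMod q) (μ : Fin M → PMF (ZMod q))
    (hμ : ∀ (i : Fin M) (x : ZMod q), μ i x ≠ 0 → |x.valMinAbs| ≤ (k : ℤ)) :
    ((st = s →
        ∀ (a : Fin M → Fin n → ZMod q) (e : Fin M → ZMod q),
          (∀ i, |(e i).valMinAbs| ≤ (k : ℤ)) →
          ∀ i, |((∑ x, a i x * s x) + e i - ∑ x, a i x * st x).valMinAbs| ≤ (k : ℤ)) ∧
      (st ≠ s →
        (∑ a : Fin M → Fin n → ZMod q, ∑ e : Fin M → ZMod q,
            if ∀ i, |((∑ x, a i x * s x) + e i - ∑ x, a i x * st x).valMinAbs| ≤ (k : ℤ)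
            then (∏ i, μ i (e i)) * ((1 : ℝ≥0∞) / (q : ℝ≥0∞) ^ n) ^ M
            else 0)
          ≤ ((2 * k + 1 : ℝ≥0∞) / q) ^ M)) := by
  constructor
  · rintro rfl a e he i
    simpa using he i
  · intro hne
    obtain ⟨x₀, hx₀⟩ : ∃ x, s x - st x ≠ 0 := by
      by_contra h
      push_neg at h
      exact hne (funext fun x => by
        have := h x; rw [sub_eq_zero] at this; exact this.symm)
    have hrw : ∀ (A : Fin n → ZMod q) (E : ZMod q),
        (∑ x, A x * s x) + E - ∑ x, A x * st x = (∑ x, A x * (s x - st x)) + E := by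
      intro A E
      simp only [mul_sub, Finset.sum_sub_distrib]
      ring
    set c : ℝ≥0∞ := (1 : ℝ≥0∞) / (q : ℝ≥0∞) ^ n with hc
    have hprod : ∀ (a : Fin M → Fin n → ZMod q) (e : Fin M → ZMod q),
        (if ∀ i, |((∑ x, a i x * s x) + e i - ∑ x, a i x * st x).valMinAbs| ≤ (k:ℤ)
          then (∏ i, μ i (e i)) * c ^ M else 0)
        = ∏ i, (if |((∑ x, a i x * (s x - st x)) + e i).valMinAbs| ≤ (k:ℤ)
            then μ i (e i) * c else 0) := by
      intro a e
      simp only [hrw]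
      by_cases h : ∀ i, |((∑ x, a i x * (s x - st x)) + e i).valMinAbs| ≤ (k:ℤ)
      · rw [if_pos h, Finset.prod_congr rfl (fun i _ => if_pos (h i)),
          Finset.prod_mul_distrib, Finset.prod_const, Finset.card_univ, Fintype.card_fin]
      · rw [if_neg h]
        push_neg at h
        obtain ⟨i, hi⟩ := h
        refine (Finset.prod_eq_zero (Finset.mem_univ i) ?_).symm
        exact if_neg (not_le.mpr hi)
    calc (∑ a : Fin M → Fin n → ZMod q, ∑ e : Fin M → ZMod q,
          if ∀ i, |((∑ x, a i x * s x) + e i - ∑ x, a i x * st x).valMinAbs| ≤ (k:ℤ)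
          then (∏ i, μ i (e i)) * c ^ M else 0)
        = ∑ a : Fin M → Fin n → ZMod q, ∑ e : Fin M → ZMod q,
            ∏ i, (if |((∑ x, a i x * (s x - st x)) + e i).valMinAbs| ≤ (k:ℤ)
              then μ i (e i) * c else 0) :=
          Finset.sum_congr rfl fun a _ => Finset.sum_congr rfl fun e _ => hprod a e
      _ = ∑ p : (Fin M → Fin n → ZMod q) × (Fin M → ZMod q),
            ∏ i, (if |((∑ x, p.1 i x * (s x - st x)) + p.2 i).valMinAbs| ≤ (k:ℤ)
              then μ i (p.2 i) * c else 0) :=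
          (Fintype.sum_prod_type' (f := fun (a : Fin M → Fin n → ZMod q)
            (e : Fin M → ZMod q) =>
            ∏ i, (if |((∑ x, a i x * (s x - st x)) + e i).valMinAbs| ≤ (k:ℤ)
              then μ i (e i) * c else 0))).symm
      _ = ∑ f : Fin M → (Fin n → ZMod q) × ZMod q,
            ∏ i, (if |((∑ x, (f i).1 x * (s x - st x)) + (f i).2).valMinAbs| ≤ (k:ℤ)
              then μ i ((f i).2) * c else 0) := by
          exact (Fintype.sum_equiv (Equiv.arrowProdEquivProdArrow (Fin M) _ _) _ _
            fun f => rfl).symm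
      _ = ∏ i, ∑ p : (Fin n → ZMod q) × ZMod q,
            (if |((∑ x, p.1 x * (s x - st x)) + p.2).valMinAbs| ≤ (k:ℤ)
              then μ i p.2 * c else 0) :=
          (Fintype.prod_sum (f := fun (i : Fin M) (p : (Fin n → ZMod q) × ZMod q) =>
            (if |((∑ x, p.1 x * (s x - st x)) + p.2).valMinAbs| ≤ (k:ℤ)
              then μ i p.2 * c else 0))).symm
      _ = ∏ i, ∑ A : Fin n → ZMod q, ∑ E : ZMod q,
            (if |((∑ x, A x * (s x - st x)) + E).valMinAbs| ≤ (k:ℤ)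
              then μ i E * c else 0) :=
          Finset.prod_congr rfl fun i _ =>
            Fintype.sum_prod_type' (f := fun (A : Fin n → ZMod q) (E : ZMod q) =>
              (if |((∑ x, A x * (s x - st x)) + E).valMinAbs| ≤ (k:ℤ)
                then μ i E * c else 0))
      _ ≤ ∏ _i : Fin M, ((2*k+1 : ℝ≥0∞)/q) :=
          Finset.prod_le_prod' fun i _ =>
            iter_bound q n k hq (fun x => s x - st x) x₀ hx₀ (μ i)
      _ = ((2*k+1 : ℝ≥0∞)/q)^M := by
          rw [Finset.prod_const, Finset.card_univ, Fintype.card_fin]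
end

section
/- Let n ≥ 1, s ∈ {0,1}^n, and e_a ∈ {0,1} for a ∈ {0,1}^n fixed bits. After applying the Hadamard transform to all n+1 qubits of the state (1/√(2^n)) Σ_{a ∈ {0,1}^n} |a⟩|a·s + e_a mod 2⟩ and measuring, the probability that the outcome is (s, 1) equals (1/2^{2n+1}) · (Σ_{a ∈ {0,1}^n} (−1)^{e_a})². -/
/-! The amplitude of `|s⟩|1⟩` collects the phase `(-1)^{a·s}` from the first `n` Hadamards and
`(-1)^{(a·s + e_a)·1}` from the last one; modulo 2 the two copies of `a·s` cancel, leaving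
`(-1)^{e_a}`, and the normalisation squares to `2^{-n} · 2^{-(n+1)}`. -/

theorem CharTwo.add_add_mul_one {R : Type*} [Ring R] [CharP R 2] (x y : R) :
    x + (x + y) * 1 = y := by
  rw [mul_one, ← add_assoc, CharTwo.add_self_eq_zero, zero_add]

theorem hadamard_normalization_sq (n : ℕ) :
    ((1 / Real.sqrt (2 ^ n)) * (1 / Real.sqrt 2) ^ (n + 1)) ^ 2 = 1 / 2 ^ (2 * n + 1) := by
  have h2 : Real.sqrt 2 ^ 2 = 2 := Real.sq_sqrt zero_le_two
  have h2n : Real.sqrt (2 ^ n) ^ 2 = 2 ^ n := Real.sq_sqrt (by positivity)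
  rw [mul_pow, div_pow, h2n, ← pow_mul, div_pow, mul_comm (n + 1), pow_mul (Real.sqrt 2), h2]
  field_simp
  ring

theorem stmt11_general (n : ℕ) (s : Fin n → ZMod 2)
    (e : (Fin n → ZMod 2) → ZMod 2) :
    ((1 / Real.sqrt (2 ^ n)) * (1 / Real.sqrt 2) ^ (n + 1) *
        ∑ a : Fin n → ZMod 2,
          (-1 : ℝ) ^ ((∑ i, a i * s i) + ((∑ i, a i * s i) + e a) * 1).val) ^ 2
      = (1 / 2 ^ (2 * n + 1)) *
          (∑ a : Fin n → ZMod 2, (-1 : ℝ) ^ (e a).val) ^ 2 := by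
  simp only [CharTwo.add_add_mul_one]
  rw [mul_pow, hadamard_normalization_sq]

/-- After applying the Hadamard transform to all `n+1` qubits of the state
`(1/√(2^n)) Σ_{a ∈ {0,1}^n} |a⟩|a·s + e_a (mod 2)⟩` and measuring, the
probability that the outcome is `(s, 1)` equals
`(1/2^{2n+1}) (Σ_a (−1)^{e_a})²`. -/
theorem stmt11 (n : ℕ) (hn : 1 ≤ n) (s : Fin n → ZMod 2)
    (e : (Fin n → ZMod 2) → ZMod 2) :
    ((1 / Real.sqrt (2 ^ n)) * (1 / Real.sqrt 2) ^ (n + 1) *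
        ∑ a : Fin n → ZMod 2,
          (-1 : ℝ) ^ ((∑ i, a i * s i) + ((∑ i, a i * s i) + e a) * 1).val) ^ 2
      = (1 / 2 ^ (2 * n + 1)) *
          (∑ a : Fin n → ZMod 2, (-1 : ℝ) ^ (e a).val) ^ 2 :=
  stmt11_general n s e
end
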